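/- arXiv:2112.05965 — 2 statements merged into one kernel-verified Lean document; each statement's English description precedes it below -/
import Mathlib

section
/- Let ξ ∈ ℝⁿ, let γ : [0,∞) → [0,∞) be strictly increasing with γ(0) = 0, let x : ℕ → ℝⁿ be a sequence, and let V : ℕ → ℝ satisfy V(k) ≥ 0 and V(k+1) ≤ V(k) − γ(‖x(k) − ξ‖) for all k ∈ ℕ. Then x(k) → ξ as k → ∞. -/
/-!
Telescoping the descent inequality bounds the partial sums of `γ ‖x k - ξ‖` by `V 0`, so this
nonnegative series converges and its terms tend to `0`. Since `γ` is strictly increasing with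
`γ 0 = 0`, `γ t < γ ε` forces `t < ε`, hence `‖x k - ξ‖ → 0`.
-/

open Filter Topology Finset

theorem summable_of_le_sub_succ {a V : ℕ → ℝ} (ha : ∀ k, 0 ≤ a k) (hV : ∀ k, 0 ≤ V k)
    (hdec : ∀ k, V (k + 1) ≤ V k - a k) : Summable a := by
  have hpartial : ∀ N, ∑ k ∈ range N, a k ≤ V 0 - V N := by
    intro N
    induction N with
    | zero => simp
    | succ N ih =>
      rw [sum_range_succ]
      linarith [hdec N]
  exact summable_of_sum_range_le ha fun N => by linarith [hpartial N, hV N]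

theorem StrictMonoOn.map_nonneg_of_map_zero {γ : ℝ → ℝ} (hγ : StrictMonoOn γ (Set.Ici 0))
    (hγ0 : γ 0 = 0) {t : ℝ} (ht : 0 ≤ t) : 0 ≤ γ t :=
  hγ0 ▸ hγ.monotoneOn Set.self_mem_Ici ht ht

theorem StrictMonoOn.tendsto_zero_of_tendsto_map_zero {ι : Type*} {l : Filter ι}
    {γ : ℝ → ℝ} (hγ : StrictMonoOn γ (Set.Ici 0)) (hγ0 : γ 0 = 0)
    {u : ι → ℝ} (hu : ∀ i, 0 ≤ u i) (hγu : Tendsto (fun i => γ (u i)) l (𝓝 0)) :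
    Tendsto u l (𝓝 0) := by
  refine tendsto_order.2 ⟨fun ε hε => Eventually.of_forall fun i => hε.trans_le (hu i),
    fun ε hε => ?_⟩
  have hγε : 0 < γ ε := hγ0 ▸ hγ Set.self_mem_Ici hε.le hε
  filter_upwards [(tendsto_order.1 hγu).2 _ hγε] with i hi
  exact (hγ.lt_iff_lt (hu i) hε.le).1 hi

theorem stmt_6_general {n : ℕ} (ξ : EuclideanSpace ℝ (Fin n))
    (γ : ℝ → ℝ) (hγmono : StrictMonoOn γ (Set.Ici 0))
    (hγ0 : γ 0 = 0)
    (x : ℕ → EuclideanSpace ℝ (Fin n)) (V : ℕ → ℝ)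
    (hV : ∀ k, 0 ≤ V k) (hdec : ∀ k, V (k + 1) ≤ V k - γ ‖x k - ξ‖) :
    Filter.Tendsto x Filter.atTop (nhds ξ) := by
  have hγx : ∀ k, 0 ≤ γ ‖x k - ξ‖ := fun k => hγmono.map_nonneg_of_map_zero hγ0 (norm_nonneg _)
  have hsum : Summable fun k => γ ‖x k - ξ‖ := summable_of_le_sub_succ hγx hV hdec
  exact tendsto_iff_norm_sub_tendsto_zero.2 <|
    hγmono.tendsto_zero_of_tendsto_map_zero hγ0 (fun k => norm_nonneg _) hsum.tendsto_atTop_zero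

/-- If `γ : [0,∞) → [0,∞)` is strictly increasing with `γ 0 = 0`,
`x : ℕ → ℝⁿ`, and `V : ℕ → ℝ` satisfies `V k ≥ 0` and `V (k+1) ≤ V k - γ ‖x k - ξ‖`
for all `k`, then `x k → ξ`. -/
theorem stmt_6 {n : ℕ} (ξ : EuclideanSpace ℝ (Fin n))
    (γ : ℝ → ℝ) (hγmono : StrictMonoOn γ (Set.Ici 0))
    (hγnonneg : ∀ t, 0 ≤ t → 0 ≤ γ t) (hγ0 : γ 0 = 0)
    (x : ℕ → EuclideanSpace ℝ (Fin n)) (V : ℕ → ℝ)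
    (hV : ∀ k, 0 ≤ V k) (hdec : ∀ k, V (k + 1) ≤ V k - γ ‖x k - ξ‖) :
    Filter.Tendsto x Filter.atTop (nhds ξ) :=
  stmt_6_general ξ γ hγmono hγ0 x V hV hdec
end

section
/- Let Q be a real symmetric positive definite n × n matrix, ξ ∈ ℝⁿ, x : ℕ → ℝⁿ a sequence, and V : ℕ → ℝ a sequence with V(k) ≥ 0 for all k such that V(k+1) − V(k) ≤ −(x(k) − ξ)ᵀ Q (x(k) − ξ) for all k ∈ ℕ. Then x(k) → ξ as k → ∞. -/
/-!
Telescoping the descent inequality bounds the partial sums of the stage costs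
`(x k - ξ)ᵀ Q (x k - ξ)` by `V 0`, so these costs are summable and tend to `0`. A positive
definite form dominates `c ‖·‖²`, with `c > 0` its minimum on the unit sphere, hence `x k → ξ`.
-/

open Matrix Filter Topology

theorem exists_pos_mul_sq_norm_le_of_homogeneous {E : Type*} [NormedAddCommGroup E]
    [NormedSpace ℝ E] [FiniteDimensional ℝ E] {q : E → ℝ} (hq : Continuous q)
    (hsmul : ∀ (t : ℝ) v, q (t • v) = t ^ 2 * q v) (hpos : ∀ v, v ≠ 0 → 0 < q v) :
    ∃ c > 0, ∀ v, c * ‖v‖ ^ 2 ≤ q v := by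
  have hq0 : q 0 = 0 := by simpa using hsmul 0 0
  rcases subsingleton_or_nontrivial E with hE | hE
  · exact ⟨1, one_pos, fun v => by simp [Subsingleton.elim v 0, hq0]⟩
  obtain ⟨u, hu, hmin⟩ := (isCompact_sphere (0 : E) 1).exists_isMinOn
    (NormedSpace.sphere_nonempty.2 zero_le_one) hq.continuousOn
  have hu0 : u ≠ 0 := ne_zero_of_mem_unit_sphere ⟨u, hu⟩
  refine ⟨q u, hpos u hu0, fun v => ?_⟩
  rcases eq_or_ne v 0 with rfl | hv
  · simp [hq0]
  have hnv : ‖v‖ ≠ 0 := norm_ne_zero_iff.2 hv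
  have hw : ‖v‖⁻¹ • v ∈ Metric.sphere (0 : E) 1 := by
    simp [norm_smul, hnv]
  calc q u * ‖v‖ ^ 2 ≤ q (‖v‖⁻¹ • v) * ‖v‖ ^ 2 := by gcongr; exact hmin hw
    _ = q v := by rw [hsmul, inv_pow]; field_simp

theorem Matrix.PosDef.exists_pos_mul_sq_norm_le_dotProduct_mulVec {ι : Type*} [Fintype ι]
    {Q : Matrix ι ι ℝ} (hQ : Q.PosDef) : ∃ c > 0, ∀ v : ι → ℝ, c * ‖v‖ ^ 2 ≤ v ⬝ᵥ Q *ᵥ v :=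
  exists_pos_mul_sq_norm_le_of_homogeneous (by fun_prop)
    (fun t v => by simp only [smul_dotProduct, mulVec_smul, dotProduct_smul, smul_eq_mul]; ring)
    (fun _ hv => hQ.dotProduct_mulVec_pos hv)

theorem summable_of_le_sub_succ_s7 {f V : ℕ → ℝ} {b : ℝ} (hf : ∀ k, 0 ≤ f k) (hV : ∀ k, b ≤ V k)
    (hdesc : ∀ k, f k ≤ V k - V (k + 1)) : Summable f :=
  summable_of_sum_range_le hf fun N =>
    calc ∑ k ∈ Finset.range N, f k ≤ ∑ k ∈ Finset.range N, (V k - V (k + 1)) :=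
          Finset.sum_le_sum fun k _ => hdesc k
      _ = V 0 - V N := Finset.sum_range_sub' V N
      _ ≤ V 0 - b := by linarith [hV N]

theorem tendsto_of_tendsto_coercive {α E : Type*} [NormedAddCommGroup E] {l : Filter α}
    {q : E → ℝ} {c : ℝ} (hc : 0 < c) (hq : ∀ v, c * ‖v‖ ^ 2 ≤ q v) {x : α → E} {ξ : E}
    (hx : Tendsto (fun k => q (x k - ξ)) l (𝓝 0)) : Tendsto x l (𝓝 ξ) := by
  have hnorm : ∀ v, ‖v‖ ≤ √(q v / c) := fun v => by
    simpa using Real.abs_le_sqrt ((le_div_iff₀ hc).2 ((mul_comm _ _).trans_le (hq v)))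
  have hbound : Tendsto (fun k => √(q (x k - ξ) / c)) l (𝓝 0) := by
    simpa using (hx.div_const c).sqrt
  exact tendsto_iff_norm_sub_tendsto_zero.2 <|
    squeeze_zero (fun _ => norm_nonneg _) (fun _ => hnorm _) hbound

theorem stmt_7_general {n : ℕ} (Q : Matrix (Fin n) (Fin n) ℝ) (hQpd : Q.PosDef)
    (ξ : Fin n → ℝ) (x : ℕ → Fin n → ℝ) (V : ℕ → ℝ) (hV : ∀ k, 0 ≤ V k)
    (hdec : ∀ k, V (k + 1) - V k ≤ -((x k - ξ) ⬝ᵥ Q.mulVec (x k - ξ))) :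
    Filter.Tendsto x Filter.atTop (nhds ξ) := by
  obtain ⟨c, hc, hcoer⟩ := hQpd.exists_pos_mul_sq_norm_le_dotProduct_mulVec
  have hsum : Summable fun k => (x k - ξ) ⬝ᵥ Q *ᵥ (x k - ξ) :=
    summable_of_le_sub_succ_s7 (fun k => hQpd.posSemidef.dotProduct_mulVec_nonneg _) hV
      fun k => by linarith [hdec k]
  exact tendsto_of_tendsto_coercive hc hcoer hsum.tendsto_atTop_zero

/-- Let `Q` be a real symmetric positive definite `n × n` matrix, `ξ ∈ ℝⁿ`,
`x : ℕ → ℝⁿ`, and `V : ℕ → ℝ` with `V k ≥ 0` and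
`V (k+1) - V k ≤ -(x k - ξ)ᵀ Q (x k - ξ)` for all `k`. Then `x k → ξ`. -/
theorem stmt_7 {n : ℕ} (Q : Matrix (Fin n) (Fin n) ℝ) (hQsymm : Q.IsSymm) (hQpd : Q.PosDef)
    (ξ : Fin n → ℝ) (x : ℕ → Fin n → ℝ) (V : ℕ → ℝ) (hV : ∀ k, 0 ≤ V k)
    (hdec : ∀ k, V (k + 1) - V k ≤ -((x k - ξ) ⬝ᵥ Q.mulVec (x k - ξ))) :
    Filter.Tendsto x Filter.atTop (nhds ξ) :=
  stmt_7_general Q hQpd ξ x V hV hdec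
end
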